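/- A full-dimensional polytope P in ℝ^d is perfectly centered if and only if P is centered and N(F;P) ∩ N(F^D;P*) ≠ ∅ for every nontrivial face F of P. -/

import Mathlib

open Pointwise RealInnerProductSpace

noncomputable section

abbrev E (d : ℕ) : Type := EuclideanSpace ℝ (Fin d)

def IsPolytope {d : ℕ} (P : Set (E d)) : Prop :=
  ∃ V : Finset (E d), V.Nonempty ∧ P = convexHull ℝ (V : Set (E d))

def maximizers {d : ℕ} (P : Set (E d)) (c : E d) : Set (E d) :=
  {x ∈ P | ∀ y ∈ P, ⟪y, c⟫ ≤ ⟪x, c⟫}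

def IsFace {d : ℕ} (P F : Set (E d)) : Prop :=
  F = ∅ ∨ F = P ∨ ∃ c : E d, c ≠ 0 ∧ F = maximizers P c

def IsNontrivialFace {d : ℕ} (P F : Set (E d)) : Prop :=
  IsFace P F ∧ F ≠ ∅ ∧ F ≠ P

def polarDual {d : ℕ} (P : Set (E d)) : Set (E d) :=
  {x | ∀ y ∈ P, ⟪x, y⟫ ≤ 1}

def dualFace {d : ℕ} (P F : Set (E d)) : Set (E d) :=
  {x ∈ polarDual P | ∀ f ∈ F, ⟪x, f⟫ = 1}

def normalCone {d : ℕ} (P F : Set (E d)) : Set (E d) :=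
  {c | maximizers P c = F}

def IsPerfectlyCentered {d : ℕ} (P : Set (E d)) : Prop :=
  ∀ F : Set (E d), IsFace P F → F.Nonempty →
    (intrinsicInterior ℝ F ∩ normalCone P F).Nonempty

def dimSet {d : ℕ} (F : Set (E d)) : ℕ :=
  Module.finrank ℝ (affineSpan ℝ F).direction

def fVec {d : ℕ} (P : Set (E d)) (k : ℕ) : ℕ :=
  {F : Set (E d) | IsFace P F ∧ F.Nonempty ∧ dimSet F = k}.ncard

/-!
Forward direction: if `x ∈ relint F` and `S(P; x) = F`, then the maximum of `⟪·, x⟫` over `P*`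
is `1`, and a dual point `u` with `⟪u, x⟫ = 1` is `≤ 1` on `F` and equal to `1` at a relative
interior point of `F`, hence equal to `1` on all of `F`; so `S(P*; x) = F^D`.

Backward direction: given `c` in both normal cones, bipolarity `P** = P` puts a positive multiple
`x` of `c` on `F`. If `x` were on the relative boundary of `F`, a direction `w` supporting `F` at
`x` but not constant on `F` could be used to tilt `x` to `x + εw`; because `P` has finitely many
vertices, `x` still maximises `⟪·, x + εw⟫` over `P` for small `ε > 0`, so the normalised
`x + εw` lies in `S(P*; x) = F^D` while it is `< 1` somewhere on `F`.
-/

open Set Filter Topology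

theorem intrinsicInterior_eq_interior_of_affineSpan_eq_top {V P : Type*} [AddCommGroup V]
    [Module ℝ V] [TopologicalSpace P] [AddTorsor V P] {s : Set P}
    (hs : affineSpan ℝ s = ⊤) : intrinsicInterior ℝ s = interior s := by
  refine (interior_subset_intrinsicInterior).antisymm' ?_
  have hopen : IsOpen (affineSpan ℝ s : Set P) := by simp [hs]
  rintro _ ⟨y, hy, rfl⟩
  exact interior_mono (image_preimage_subset _ _)
    (hopen.isOpenMap_subtype_val.image_interior_subset _ ⟨y, hy, rfl⟩)

theorem eventually_lineMap_mem_of_mem_intrinsicInterior {V P : Type*} [AddCommGroup V]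
    [Module ℝ V] [TopologicalSpace V] [IsTopologicalAddGroup V] [ContinuousSMul ℝ V]
    [TopologicalSpace P] [AddTorsor V P] [IsTopologicalAddTorsor P] {s : Set P} {x y : P}
    (hx : x ∈ intrinsicInterior ℝ s) (hy : y ∈ s) :
    ∀ᶠ t in 𝓝 (0 : ℝ), AffineMap.lineMap x y t ∈ s := by
  obtain ⟨x', hx', rfl⟩ := hx
  let γ (t : ℝ) : affineSpan ℝ s :=
    ⟨AffineMap.lineMap (x' : P) y t, AffineMap.lineMap_mem t x'.2 (subset_affineSpan ℝ s hy)⟩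
  have hγ : Continuous γ := AffineMap.lineMap_continuous.subtype_mk _
  have := (hγ.tendsto' 0 x' (by simp [γ])).eventually (isOpen_interior.mem_nhds hx')
  exact this.mono fun t ht => (interior_subset ht : γ t ∈ Subtype.val ⁻¹' s)

section

variable {d : ℕ}

theorem inner_le_of_mem_convexHull {V : Set (E d)} {u y : E d} {b : ℝ}
    (h : ∀ v ∈ V, ⟪v, u⟫ ≤ b) (hy : y ∈ convexHull ℝ V) : ⟪y, u⟫ ≤ b :=
  convexHull_min h (convex_halfSpace_le ((innerₛₗ ℝ).flip u).isLinear b) hy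

theorem maximizers_zero (P : Set (E d)) : maximizers P 0 = P := by
  simp [maximizers]

theorem maximizers_smul (P : Set (E d)) (c : E d) {t : ℝ} (ht : 0 < t) :
    maximizers P (t • c) = maximizers P c := by
  simp only [maximizers, real_inner_smul_right, mul_le_mul_iff_right₀ ht]

theorem maximizers_eq_toExposed (P : Set (E d)) (c : E d) :
    maximizers P c = (innerSL ℝ c).toExposed P := by
  simp [maximizers, ContinuousLinearMap.toExposed, real_inner_comm c]

theorem Convex.maximizers {P : Set (E d)} (hP : Convex ℝ P) (c : E d) :
    Convex ℝ (maximizers P c) :=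
  maximizers_eq_toExposed P c ▸ ContinuousLinearMap.toExposed.isExposed.convex hP

theorem eq_zero_of_maximizers_eq_self {P : Set (E d)} (hP : affineSpan ℝ P = ⊤) {c : E d}
    (hc : maximizers P c = P) : c = 0 := by
  have hspan : vectorSpan ℝ P ≤ LinearMap.ker (innerₛₗ ℝ c) := by
    refine Submodule.span_le.2 ?_
    rintro _ ⟨y, hy, z, hz, rfl⟩
    rw [← hc] at hy hz
    simp only [SetLike.mem_coe, LinearMap.mem_ker, innerₛₗ_apply_apply, vsub_eq_sub,
      inner_sub_right, sub_eq_zero, real_inner_comm y c, real_inner_comm z c]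
    exact (hz.2 y hy.1).antisymm (hy.2 z hz.1)
  rw [← direction_affineSpan, hP, AffineSubspace.direction_top] at hspan
  simpa using hspan (Submodule.mem_top : c ∈ ⊤)

theorem IsPolytope.convex {P : Set (E d)} (hP : IsPolytope P) : Convex ℝ P := by
  obtain ⟨V, -, rfl⟩ := hP
  exact convex_convexHull ℝ _

theorem IsPolytope.isClosed {P : Set (E d)} (hP : IsPolytope P) : IsClosed P := by
  obtain ⟨V, -, rfl⟩ := hP
  exact (V.finite_toSet.isCompact_convexHull (𝕜 := ℝ)).isClosed

theorem IsPolytope.nonempty {P : Set (E d)} (hP : IsPolytope P) : P.Nonempty := by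
  obtain ⟨V, hV, rfl⟩ := hP
  exact convexHull_nonempty_iff.2 hV.to_set

theorem inv_smul_mem_polarDual {P : Set (E d)} {c : E d} {t : ℝ} (h : ∀ y ∈ P, ⟪y, c⟫ ≤ t)
    (ht : 0 < t) : t⁻¹ • c ∈ polarDual P := by
  intro y hy
  rw [real_inner_smul_left, inv_mul_le_iff₀ ht, mul_one, real_inner_comm]
  exact h y hy

theorem polarDual_polarDual {P : Set (E d)} (hc : IsClosed P) (hconv : Convex ℝ P)
    (h0 : (0 : E d) ∈ P) : polarDual (polarDual P) = P := by
  refine Subset.antisymm (fun x hx => ?_) fun x hx u hu => real_inner_comm x u ▸ hu x hx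
  by_contra hxP
  obtain ⟨ℓ, s, hℓP, hsx⟩ := geometric_hahn_banach_closed_point hconv hc hxP
  have hs : 0 < s := by simpa using hℓP 0 h0
  have hw : ∀ y, ⟪y, (InnerProductSpace.toDual ℝ (E d)).symm ℓ⟫ = ℓ y := fun y => by
    rw [real_inner_comm, InnerProductSpace.toDual_symm_apply]
  have := hx _ (inv_smul_mem_polarDual (fun y hy => ((hw y).trans_lt (hℓP y hy)).le) hs)
  rw [real_inner_smul_right, hw, inv_mul_le_iff₀ hs, mul_one] at this
  linarith

theorem maximizers_polarDual_eq {P : Set (E d)} {x : E d} (hx : x ∈ maximizers P x)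
    (hx0 : x ≠ 0) : maximizers (polarDual P) x = {u ∈ polarDual P | ⟪u, x⟫ = 1} := by
  have hxx : 0 < ⟪x, x⟫ := real_inner_self_pos.2 hx0
  have hu₀ : (⟪x, x⟫)⁻¹ • x ∈ polarDual P := inv_smul_mem_polarDual hx.2 hxx
  have hu₀x : ⟪(⟪x, x⟫)⁻¹ • x, x⟫ = 1 := by
    rw [real_inner_smul_left, inv_mul_cancel₀ hxx.ne']
  ext u
  constructor
  · rintro ⟨hu, hmax⟩
    exact ⟨hu, (hu x hx.1).antisymm (hu₀x ▸ hmax _ hu₀)⟩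
  · rintro ⟨hu, hux⟩
    exact ⟨hu, fun v hv => hux ▸ hv x hx.1⟩

theorem inner_eq_of_mem_intrinsicInterior {F : Set (E d)} {x f u : E d}
    (hx : x ∈ intrinsicInterior ℝ F) (hmax : ∀ y ∈ F, ⟪y, u⟫ ≤ ⟪x, u⟫) (hf : f ∈ F) :
    ⟪f, u⟫ = ⟪x, u⟫ := by
  obtain ⟨t, htF, ht⟩ := ((eventually_lineMap_mem_of_mem_intrinsicInterior hx hf).filter_mono
    nhdsWithin_le_nhds |>.and (self_mem_nhdsWithin (s := Iio 0))).exists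
  have := hmax _ htF
  rw [AffineMap.lineMap_apply_module', inner_add_left, real_inner_smul_left, inner_sub_left]
    at this
  nlinarith [hmax f hf, show t < 0 from ht]

theorem exists_inner_lt_of_notMem_intrinsicInterior {F : Set (E d)} (hF : Convex ℝ F)
    {x : E d} (hx : x ∈ F) (hxF : x ∉ intrinsicInterior ℝ F) :
    ∃ w, (∀ y ∈ F, ⟪y, w⟫ ≤ ⟪x, w⟫) ∧ ∃ f ∈ F, ⟪f, w⟫ < ⟪x, w⟫ := by
  set A := affineSpan ℝ F
  let x' : A := ⟨x, subset_affineSpan ℝ F hx⟩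
  have : Nonempty A := ⟨x'⟩
  have : Nonempty F := ⟨⟨x, hx⟩⟩
  let φ := ContinuousAffineEquiv.vaddConst ℝ x'
  -- `T` is `F - x` inside the direction of `aff F`, where relative interior becomes interior.
  let T : Set A.direction := φ ⁻¹' ((↑) ⁻¹' F)
  have hφ (v : A.direction) : (φ v : E d) = v + x := rfl
  have hT : Convex ℝ T := hF.affine_preimage (A.subtype.comp φ.toAffineEquiv.toAffineMap)
  have hTint : (interior T).Nonempty := by
    refine hT.interior_nonempty_iff_affineSpan_eq_top.2 ?_
    rw [show T = φ.symm '' _ from (φ.image_symm_eq_preimage _).symm]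
    exact (φ.symm.toAffineEquiv.span_eq_top_iff).1 (affineSpan_coe_preimage_eq_top F)
  have h0T : (0 : A.direction) ∉ interior T := by
    intro h
    rw [show T = φ.toHomeomorph ⁻¹' _ from rfl, ← φ.toHomeomorph.preimage_interior] at h
    exact hxF ⟨_, h, (hφ 0).trans (zero_add x)⟩
  obtain ⟨ℓ, hℓ⟩ := geometric_hahn_banach_open_point hT.interior isOpen_interior h0T
  have hle (v : A.direction) (hv : v ∈ T) : ℓ v ≤ 0 := by
    have : v ∈ closure (interior T) :=
      hT.closure_interior_eq_closure_of_nonempty_interior hTint ▸ subset_closure hv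
    exact closure_minimal (fun a ha => (map_zero ℓ ▸ hℓ a ha).le)
      (isClosed_le ℓ.continuous continuous_const) this
  obtain ⟨b, hb⟩ := hTint
  set w : A.direction := (InnerProductSpace.toDual ℝ A.direction).symm ℓ
  have hw (v : A.direction) : ⟪(v : E d), (w : E d)⟫ = ℓ v := by
    rw [← Submodule.coe_inner, real_inner_comm, InnerProductSpace.toDual_symm_apply]
  refine ⟨w, fun y hy => ?_, b + x, (interior_subset hb : b ∈ T), ?_⟩
  · let v : A.direction :=
      ⟨y - x, AffineSubspace.vsub_mem_direction (subset_affineSpan ℝ F hy) x'.2⟩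
    have hv : v ∈ T := show (φ v : E d) ∈ F by simpa [hφ, v] using hy
    have := hw v ▸ hle v hv
    rw [inner_sub_left] at this
    linarith
  · have := hw b ▸ map_zero ℓ ▸ hℓ b hb
    rw [inner_add_left]
    linarith

theorem IsPolytope.eventually_mem_maximizers_add_smul {P : Set (E d)} (hP : IsPolytope P)
    {x c w : E d} (hx : x ∈ maximizers P c) (hw : ∀ y ∈ maximizers P c, ⟪y, w⟫ ≤ ⟪x, w⟫) :
    ∀ᶠ ε in 𝓝[>] (0 : ℝ), x ∈ maximizers P (c + ε • w) := by
  obtain ⟨V, -, rfl⟩ := hP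
  have hV : ∀ v ∈ V, ∀ᶠ ε in 𝓝[>] (0 : ℝ), ⟪v, c + ε • w⟫ ≤ ⟪x, c + ε • w⟫ := by
    intro v hv
    have hvP : v ∈ convexHull ℝ (V : Set (E d)) := subset_convexHull ℝ _ hv
    simp only [inner_add_right, real_inner_smul_right]
    by_cases hvF : v ∈ maximizers (convexHull ℝ ↑V) c
    · filter_upwards [self_mem_nhdsWithin] with ε (hε : 0 < ε)
      nlinarith [hw v hvF, hvF.2 x hx.1, hx.2 v hvP]
    · have hlt : ⟪v, c⟫ < ⟪x, c⟫ :=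
        lt_of_not_ge fun h => hvF ⟨hvP, fun y hy => (hx.2 y hy).trans h⟩
      have hvc : Continuous fun ε : ℝ => ⟪v, c⟫ + ε * ⟪v, w⟫ := by fun_prop
      have hxc : Continuous fun ε : ℝ => ⟪x, c⟫ + ε * ⟪x, w⟫ := by fun_prop
      have := (hvc.continuousAt (x := 0)).eventually_lt hxc.continuousAt (by simpa using hlt)
      exact eventually_nhdsWithin_of_eventually_nhds (this.mono fun _ h => h.le)
  filter_upwards [(eventually_all_finset V).2 hV] with ε hε
  exact ⟨hx.1, fun y hy => inner_le_of_mem_convexHull hε hy⟩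

theorem maximizers_polarDual_eq_dualFace {P : Set (E d)} {x : E d}
    (hx : x ∈ intrinsicInterior ℝ (maximizers P x)) (hx0 : x ≠ 0) :
    maximizers (polarDual P) x = dualFace P (maximizers P x) := by
  have hxF := intrinsicInterior_subset hx
  rw [maximizers_polarDual_eq hxF hx0]
  ext u
  constructor
  · rintro ⟨hu, hux⟩
    refine ⟨hu, fun f hf => ?_⟩
    have hmax : ∀ y ∈ maximizers P x, ⟪y, u⟫ ≤ ⟪x, u⟫ := fun y hy => by
      rw [real_inner_comm u y, real_inner_comm u x, hux]
      exact hu y hy.1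
    rw [← real_inner_comm u f, inner_eq_of_mem_intrinsicInterior hx hmax hf, real_inner_comm u x,
      hux]
  · rintro ⟨hu, hF⟩
    exact ⟨hu, hF x hxF⟩

theorem mem_intrinsicInterior_of_maximizers_polarDual_eq_dualFace {P : Set (E d)}
    (hP : IsPolytope P) {x : E d} (hx : x ∈ maximizers P x) (hx0 : x ≠ 0)
    (hD : maximizers (polarDual P) x = dualFace P (maximizers P x)) :
    x ∈ intrinsicInterior ℝ (maximizers P x) := by
  by_contra hxF
  obtain ⟨w, hw, f, hf, hfw⟩ :=
    exists_inner_lt_of_notMem_intrinsicInterior (hP.convex.maximizers x) hx hxF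
  have hpos : ∀ᶠ ε in 𝓝 (0 : ℝ), 0 < ⟪x, x + ε • w⟫ := by
    have hcont : Continuous fun ε : ℝ => ⟪x, x + ε • w⟫ := by fun_prop
    exact (hcont.tendsto 0).eventually (lt_mem_nhds (by simpa using real_inner_self_pos.2 hx0))
  obtain ⟨ε, ⟨hεmax, hεpos⟩, hε⟩ := (((hP.eventually_mem_maximizers_add_smul hx hw).and
    (nhdsWithin_le_nhds hpos)).and self_mem_nhdsWithin).exists
  have hu : (⟪x, x + ε • w⟫)⁻¹ • (x + ε • w) ∈ maximizers (polarDual P) x := by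
    rw [maximizers_polarDual_eq hx hx0]
    refine ⟨inv_smul_mem_polarDual hεmax.2 hεpos, ?_⟩
    rw [real_inner_smul_left, real_inner_comm x (x + ε • w), inv_mul_cancel₀ hεpos.ne']
  have hfx : ⟪f, x⟫ = ⟪x, x⟫ := (hx.2 f hf.1).antisymm (hf.2 x hx.1)
  have h1 := (hD ▸ hu).2 f hf
  rw [real_inner_smul_left, inv_mul_eq_one₀ hεpos.ne', inner_add_left, inner_add_right,
    real_inner_smul_left, real_inner_smul_right, real_inner_comm f x, real_inner_comm f w,
    hfx] at h1
  linarith [mul_lt_mul_of_pos_left hfw hε]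

theorem inner_pos_of_mem_maximizers {P : Set (E d)} (h0 : (0 : E d) ∈ interior P) {c f : E d}
    (hc0 : c ≠ 0) (hf : f ∈ maximizers P c) : 0 < ⟪f, c⟫ := by
  have hsmul : Tendsto (fun δ : ℝ => δ • c) (𝓝 0) (𝓝 0) :=
    (continuous_id.smul continuous_const).tendsto' 0 0 (zero_smul ℝ c)
  obtain ⟨δ, hδP, hδ⟩ := ((eventually_nhdsWithin_of_eventually_nhds
    (hsmul.eventually (mem_interior_iff_mem_nhds.1 h0))).and
    (self_mem_nhdsWithin (s := Ioi (0 : ℝ)))).exists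
  have := hf.2 _ hδP
  rw [real_inner_smul_left] at this
  nlinarith [show (0 : ℝ) < δ from hδ, real_inner_self_pos.2 hc0]

theorem exists_pos_smul_mem_maximizers {P : Set (E d)} (hc : IsClosed P) (hconv : Convex ℝ P)
    (h0 : (0 : E d) ∈ interior P) {c : E d} (hc0 : c ≠ 0) (hne : (maximizers P c).Nonempty)
    (hD : maximizers (polarDual P) c = dualFace P (maximizers P c)) :
    ∃ t : ℝ, 0 < t ∧ t • c ∈ maximizers P c := by
  obtain ⟨f, hf⟩ := hne
  have hcc : 0 < ⟪c, c⟫ := real_inner_self_pos.2 hc0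
  have hh : 0 < ⟪f, c⟫ := inner_pos_of_mem_maximizers h0 hc0 hf
  have hu : (⟪f, c⟫)⁻¹ • c ∈ maximizers (polarDual P) c := by
    rw [hD]
    refine ⟨inv_smul_mem_polarDual hf.2 hh, fun g hg => ?_⟩
    rw [real_inner_smul_left, real_inner_comm g c, (hf.2 g hg.1).antisymm (hg.2 f hf.1),
      inv_mul_cancel₀ hh.ne']
  refine ⟨⟪f, c⟫ / ⟪c, c⟫, div_pos hh hcc, ?_, fun y hy => ?_⟩
  · rw [← polarDual_polarDual hc hconv (interior_subset h0)]
    intro u hu'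
    have := hu.2 u hu'
    rw [real_inner_smul_left] at this
    rw [real_inner_smul_left, real_inner_comm u c, div_mul_eq_mul_div, div_le_one hcc]
    calc ⟪f, c⟫ * ⟪u, c⟫ ≤ ⟪f, c⟫ * ((⟪f, c⟫)⁻¹ * ⟪c, c⟫) := by gcongr
      _ = ⟪c, c⟫ := by field_simp
  · rw [real_inner_smul_left, div_mul_cancel₀ _ hcc.ne']
    exact hf.2 y hy

end

theorem perfectlyCentered_iff_normalCone_inter {d : ℕ} (P : Set (E d))
    (hP : IsPolytope P) (hfull : affineSpan ℝ P = ⊤) :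
    IsPerfectlyCentered P ↔
      0 ∈ interior P ∧
      ∀ F : Set (E d), IsNontrivialFace P F →
        (normalCone P F ∩ normalCone (polarDual P) (dualFace P F)).Nonempty := by
  constructor
  · intro hPC
    obtain ⟨x, hxI, hxN⟩ := hPC P (Or.inr (Or.inl rfl)) hP.nonempty
    have h0 : (0 : E d) ∈ interior P := by
      rwa [eq_zero_of_maximizers_eq_self hfull hxN,
        intrinsicInterior_eq_interior_of_affineSpan_eq_top hfull] at hxI
    refine ⟨h0, fun F ⟨hF, hF0, hFP⟩ => ?_⟩
    obtain ⟨x, hxF, hxN : maximizers P x = F⟩ := hPC F hF (nonempty_iff_ne_empty.2 hF0)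
    have hx0 : x ≠ 0 := by rintro rfl; exact hFP (hxN ▸ maximizers_zero P)
    subst hxN
    exact ⟨x, rfl, maximizers_polarDual_eq_dualFace hxF hx0⟩
  · rintro ⟨h0, hN⟩ F hF hFne
    by_cases hFP : F = P
    · subst hFP
      exact ⟨0, interior_subset_intrinsicInterior h0, maximizers_zero F⟩
    obtain ⟨c, hcF : maximizers P c = F,
      hcD : maximizers (polarDual P) c = dualFace P F⟩ := hN F ⟨hF, hFne.ne_empty, hFP⟩
    have hc0 : c ≠ 0 := by rintro rfl; exact hFP (hcF ▸ maximizers_zero P)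
    subst hcF
    obtain ⟨t, ht, hx⟩ := exists_pos_smul_mem_maximizers hP.isClosed hP.convex h0 hc0 hFne hcD
    have htD : maximizers (polarDual P) (t • c) = dualFace P (maximizers P (t • c)) := by
      rwa [maximizers_smul _ _ ht, maximizers_smul _ _ ht]
    rw [← maximizers_smul P c ht] at hx ⊢
    exact ⟨t • c, mem_intrinsicInterior_of_maximizers_polarDual_eq_dualFace hP hx
      (smul_ne_zero ht.ne' hc0) htD, rfl⟩
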